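/- In the non-associative Hopf algebra k{{x,y}}, the element τ^{exp_l(x)}(y) := exp_l(x)\ d/ds|_{s=0} exp_l(x+sy) has degree-n component in x equal to Σ_{i=1}^{n} (1/(n+1))·(1/(n−i)!)·⟨x^{n−i}; x, τ_{i−1}⟩, where τ_0 = y and τ_j denotes the degree-j component; in particular τ_1 = (1/2)⟨x, y⟩ = −(1/2)[x,y]. -/

import Mathlib

/- STATEMENT 9: in k{{x,y}}, the degree-n component (in x) of
τ^{exp_l(x)}(y) := exp_l(x) \ d/ds|₀ exp_l(x+sy)  satisfies
τ_n = Σ_{i=1}^{n} (1/(n+1))·(1/(n−i)!)·⟨x^{n−i}; x, τ_{i−1}⟩  with τ₀ = y; in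
particular τ₁ = ½⟨x,y⟩ = −½[x,y].  Here x, y are the primitive generators of the free
unital non-associative algebra, ⟨·;·,·⟩ is the Shestakov–Umirbaev operation
(characterized by (w a)b − (w b)a = −Σ w₍₁₎⟨w₍₂₎; a, b⟩, with ⟨1; a, b⟩ = −[a,b]),
and, writing y∂_x for the derivation with x ↦ y, y ↦ 0, the degree-n component of
τ^{exp_l(x)}(y) = γ_{y∂_x}(exp_l(x)) is τ_n = (1/(n+1)!)·γ_{y∂_x}(x^{n+1}) where
γ_d(u) = Σ u₍₁₎ \ d(u₍₂₎) and x^{n+1} is the left-normed power. -/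

open TensorProduct

noncomputable section

variable (K : Type*) [Field K] [CharZero K]

/-- The free unital non-associative algebra on two generators x, y. -/
abbrev F2 := MonoidAlgebra K (WithOne (FreeMagma (Fin 2)))

def gen2 (i : Fin 2) : F2 K :=
  MonoidAlgebra.single (↑(FreeMagma.of i) : WithOne (FreeMagma (Fin 2))) 1

/-- Left-normed powers: a⁰ = 1, a^{n+1} = aⁿ·a. -/
def lpow (a : F2 K) : ℕ → F2 K
  | 0 => 1
  | n + 1 => lpow a n * a

/-- `γ_d(u) = Σ u₍₁₎ \ d(u₍₂₎)`. -/
def gammaD (Δ : F2 K →ₗ[K] F2 K ⊗[K] F2 K)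
    (ldiv : F2 K →ₗ[K] F2 K →ₗ[K] F2 K) (d : F2 K →ₗ[K] F2 K) :
    F2 K →ₗ[K] F2 K :=
  (TensorProduct.lift (ldiv.compl₂ d)).comp Δ

end

/-!
Put `e n = xⁿ / n!` (left-normed powers) and `G n = γ_D(e n)`, so that `τ n = G (n + 1)`.
Since `x` is primitive, `Δ (e n) = Σ_{i+j=n} e i ⊗ e j` and `e n * x = (n + 1) • e (n + 1)`.
Coassociativity of this coproduct and the left-division axiom give `Σ_{i+j=n} e i * G j = D (e n)`.
Applying `D` to `e n * x = (n + 1) • e (n + 1)` and rewriting `((e i * G j) * x - (e i * x) * G j)`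
with the defining identity of `⟨·; ·, ·⟩` yields
`Σ_{i+j=n} e i * ((j + 1) • G (j + 1)) = Σ_{i+j=n} e i * h j`,
where `h m = δ_{m,0} y + Σ_{l+j=m} ⟨e l; x, G j⟩`. As `e 0 = 1`, such convolution identities can be
peeled off one degree at a time, so `(m + 1) • G (m + 1) = h m`, which is the recursion.
-/

open Finset.HasAntidiagonal

section Antidiagonal

variable {M : Type*} [AddCommMonoid M]

theorem sum_antidiagonal_sum_antidiagonal_assoc {A : Type*} [AddCommMonoid A]
    [Finset.HasAntidiagonal A] (f : A → A → A → M) (n : A) :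
    ∑ p ∈ antidiagonal n, ∑ q ∈ antidiagonal p.2, f p.1 q.1 q.2 =
      ∑ p ∈ antidiagonal n, ∑ q ∈ antidiagonal p.1, f q.1 q.2 p.2 := by
  simp only [Finset.sum_sigma']
  apply Finset.sum_nbij' (fun ⟨⟨i, _⟩, ⟨k, l⟩⟩ ↦ ⟨(i + k, l), (i, k)⟩)
    (fun ⟨⟨_, l⟩, ⟨i, k⟩⟩ ↦ ⟨(i, k + l), (k, l)⟩) <;> aesop (add simp [add_assoc])

theorem succ_nsmul_sum_antidiagonal_succ (f : ℕ × ℕ → M) (n : ℕ) :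
    (n + 1) • ∑ p ∈ antidiagonal (n + 1), f p =
      ∑ p ∈ antidiagonal n, ((p.1 + 1) • f (p.1 + 1, p.2) + (p.2 + 1) • f (p.1, p.2 + 1)) := by
  calc (n + 1) • ∑ p ∈ antidiagonal (n + 1), f p
      = ∑ p ∈ antidiagonal (n + 1), (p.1 • f p + p.2 • f p) := by
        rw [Finset.smul_sum]
        refine Finset.sum_congr rfl fun p hp => ?_
        rw [← add_smul, mem_antidiagonal.1 hp]
    _ = _ := by
        rw [Finset.sum_add_distrib, Finset.Nat.sum_antidiagonal_succ,
          Finset.Nat.sum_antidiagonal_succ']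
        simp [Finset.sum_add_distrib]

theorem eq_of_forall_sum_antidiagonal_mul_eq {A : Type*} [NonAssocRing A] {e f g : ℕ → A}
    (he : e 0 = 1)
    (h : ∀ n, ∑ p ∈ antidiagonal n, e p.1 * f p.2 = ∑ p ∈ antidiagonal n, e p.1 * g p.2) :
    f = g := by
  funext n
  induction n using Nat.strong_induction_on with
  | _ n ih =>
    have h0 : ((0, n) : ℕ × ℕ) ∈ antidiagonal n := mem_antidiagonal.2 (zero_add n)
    have hrest : ∑ p ∈ (antidiagonal n).erase (0, n), e p.1 * f p.2 =
        ∑ p ∈ (antidiagonal n).erase (0, n), e p.1 * g p.2 := by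
      refine Finset.sum_congr rfl fun p hp => ?_
      obtain ⟨hne, hp⟩ := Finset.mem_erase.1 hp
      rw [mem_antidiagonal] at hp
      have : p.1 ≠ 0 := fun h1 => hne (Prod.ext h1 (by omega))
      rw [ih p.2 (by omega)]
    have hn := h n
    rw [← Finset.add_sum_erase _ _ h0, ← Finset.add_sum_erase _ _ h0, hrest, he] at hn
    simpa using hn

theorem sum_antidiagonal_eq_add_sum_Icc (f : ℕ → ℕ → M) (n : ℕ) :
    ∑ p ∈ antidiagonal n, f p.1 p.2 = f n 0 + ∑ i ∈ Finset.Icc 1 n, f (n - i) i := by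
  rw [← Finset.Nat.sum_antidiagonal_swap]
  simp only [Prod.fst_swap, Prod.snd_swap]
  rw [Finset.Nat.sum_antidiagonal_eq_sum_range_succ (fun i j => f j i), Finset.range_eq_Ico,
    Finset.sum_eq_sum_Ico_succ_bot (Nat.succ_pos n)]
  simp [Finset.Ico_add_one_right_eq_Icc]

theorem sum_antidiagonal_ite_fst_eq_zero (f : ℕ → M) (n : ℕ) :
    ∑ p ∈ antidiagonal n, (if p.1 = 0 then f p.2 else 0) = f n := by
  rw [Finset.Nat.sum_antidiagonal_eq_sum_range_succ (fun i j => if i = 0 then f j else 0)]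
  simp

end Antidiagonal

theorem map_one_eq_zero_of_leibniz {A : Type*} [NonAssocRing A] (D : A → A)
    (hD : ∀ u v, D (u * v) = D u * v + u * D v) : D 1 = 0 := by
  simpa using hD 1 1

section DividedPowers

variable {K : Type*} [Field K]

noncomputable def dividedLpow (a : F2 K) (n : ℕ) : F2 K := (n.factorial : K)⁻¹ • lpow K a n

@[simp]
theorem dividedLpow_zero (a : F2 K) : dividedLpow a 0 = 1 := by
  simp [dividedLpow, lpow]

theorem succ_nsmul_dividedLpow_succ [CharZero K] (a : F2 K) (n : ℕ) :
    (n + 1) • dividedLpow a (n + 1) = dividedLpow a n * a := by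
  rw [← Nat.cast_smul_eq_nsmul K, dividedLpow, dividedLpow, lpow, smul_smul, smul_mul_assoc]
  congr 1
  push_cast [Nat.factorial_succ]
  field_simp

structure IsDividedPowerSeq (Δ : F2 K →ₗ[K] F2 K ⊗[K] F2 K) (ε : F2 K →ₗ[K] K)
    (e : ℕ → F2 K) : Prop where
  zero : e 0 = 1
  comul : ∀ n, Δ (e n) = ∑ p ∈ antidiagonal n, e p.1 ⊗ₜ[K] e p.2
  counit : ∀ n, ε (e n) = if n = 0 then 1 else 0

theorem isDividedPowerSeq_dividedLpow [CharZero K] {Δ : F2 K →ₗ[K] F2 K ⊗[K] F2 K}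
    {ε : F2 K →ₗ[K] K} (hΔmul : ∀ u v, Δ (u * v) = Δ u * Δ v) (hΔone : Δ 1 = 1 ⊗ₜ[K] 1)
    (hεmul : ∀ u v, ε (u * v) = ε u * ε v) (hεone : ε 1 = 1) {a : F2 K}
    (hΔa : Δ a = a ⊗ₜ[K] 1 + 1 ⊗ₜ[K] a) (hεa : ε a = 0) :
    IsDividedPowerSeq Δ ε (dividedLpow a) where
  zero := dividedLpow_zero a
  comul n := by
    induction n with
    | zero => simp [hΔone]
    | succ n ih =>
      refine smul_right_injective _ (Nat.cast_add_one_ne_zero (R := K) n) ?_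
      simp only [← Nat.cast_succ, Nat.cast_smul_eq_nsmul]
      rw [← map_nsmul, succ_nsmul_dividedLpow_succ, hΔmul, ih, hΔa,
        succ_nsmul_sum_antidiagonal_succ, Finset.sum_mul]
      refine Finset.sum_congr rfl fun p _ => ?_
      rw [mul_add, Algebra.TensorProduct.tmul_mul_tmul, Algebra.TensorProduct.tmul_mul_tmul,
        mul_one, mul_one, ← succ_nsmul_dividedLpow_succ, ← succ_nsmul_dividedLpow_succ,
        TensorProduct.smul_tmul', TensorProduct.tmul_smul]
  counit
    | 0 => by simp [hεone]
    | n + 1 => by simp [dividedLpow, lpow, hεmul, hεa]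

end DividedPowers

namespace IsDividedPowerSeq

variable {K : Type*} [Field K] {Δ : F2 K →ₗ[K] F2 K ⊗[K] F2 K} {ε : F2 K →ₗ[K] K}
  {e : ℕ → F2 K} {ldiv : F2 K →ₗ[K] F2 K →ₗ[K] F2 K} {D : F2 K →ₗ[K] F2 K}

theorem gammaD_apply (he : IsDividedPowerSeq Δ ε e) (n : ℕ) :
    gammaD K Δ ldiv D (e n) = ∑ p ∈ antidiagonal n, ldiv (e p.1) (D (e p.2)) := by
  simp [gammaD, he.comul n]

theorem gammaD_zero (he : IsDividedPowerSeq Δ ε e) (hD : ∀ u v, D (u * v) = D u * v + u * D v) :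
    gammaD K Δ ldiv D (e 0) = 0 := by
  rw [he.gammaD_apply, Finset.Nat.antidiagonal_zero, Finset.sum_singleton, he.zero,
    map_one_eq_zero_of_leibniz D hD, map_zero]

theorem sum_mul_ldiv (he : IsDividedPowerSeq Δ ε e)
    (hldiv₂ : ∀ u v, TensorProduct.lift
        ((LinearMap.mul K (F2 K)).compl₂ (ldiv.flip v)) (Δ u) = ε u • v) (v : F2 K) (n : ℕ) :
    ∑ p ∈ antidiagonal n, e p.1 * ldiv (e p.2) v = if n = 0 then v else 0 := by
  simpa [he.comul n, he.counit n, apply_ite] using hldiv₂ (e n) v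

theorem sum_mul_gammaD (he : IsDividedPowerSeq Δ ε e)
    (hldiv₂ : ∀ u v, TensorProduct.lift
        ((LinearMap.mul K (F2 K)).compl₂ (ldiv.flip v)) (Δ u) = ε u • v) (n : ℕ) :
    ∑ p ∈ antidiagonal n, e p.1 * gammaD K Δ ldiv D (e p.2) = D (e n) := by
  calc ∑ p ∈ antidiagonal n, e p.1 * gammaD K Δ ldiv D (e p.2)
      = ∑ p ∈ antidiagonal n, ∑ q ∈ antidiagonal p.2, e p.1 * ldiv (e q.1) (D (e q.2)) := by
        simp only [he.gammaD_apply, Finset.mul_sum]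
    _ = ∑ p ∈ antidiagonal n, ∑ q ∈ antidiagonal p.1, e q.1 * ldiv (e q.2) (D (e p.2)) :=
        sum_antidiagonal_sum_antidiagonal_assoc (fun i k l => e i * ldiv (e k) (D (e l))) n
    _ = D (e n) := by
        simp only [he.sum_mul_ldiv hldiv₂]
        exact sum_antidiagonal_ite_fst_eq_zero (fun l => D (e l)) n

theorem mul_mul_sub_mul_mul (he : IsDividedPowerSeq Δ ε e)
    {br : F2 K →ₗ[K] F2 K →ₗ[K] F2 K →ₗ[K] F2 K}
    (hbr : ∀ w a b, (w * a) * b - (w * b) * a =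
      -(TensorProduct.lift
          ((LinearMap.mul K (F2 K)).compl₂ ((br.flip a).flip b)) (Δ w))) (n : ℕ) (a b : F2 K) :
    (e n * a) * b - (e n * b) * a = -∑ p ∈ antidiagonal n, e p.1 * br (e p.2) a b := by
  simpa [he.comul n] using hbr (e n) a b

theorem sum_mul_succ_nsmul_gammaD_succ (he : IsDividedPowerSeq Δ ε e) {a : F2 K}
    (hea : ∀ n, (n + 1) • e (n + 1) = e n * a)
    (hldiv₂ : ∀ u v, TensorProduct.lift
        ((LinearMap.mul K (F2 K)).compl₂ (ldiv.flip v)) (Δ u) = ε u • v)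
    (hD : ∀ u v, D (u * v) = D u * v + u * D v) (n : ℕ) :
    ∑ p ∈ antidiagonal n, e p.1 * ((p.2 + 1) • gammaD K Δ ldiv D (e (p.2 + 1))) =
      ∑ p ∈ antidiagonal n, ((e p.1 * gammaD K Δ ldiv D (e p.2)) * a -
        (e p.1 * a) * gammaD K Δ ldiv D (e p.2)) + e n * D a := by
  have hleib : (n + 1) • D (e (n + 1)) = D (e n) * a + e n * D a := by
    rw [← map_nsmul, hea, hD]
  rw [← he.sum_mul_gammaD hldiv₂, ← he.sum_mul_gammaD hldiv₂, succ_nsmul_sum_antidiagonal_succ,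
    Finset.sum_add_distrib, Finset.sum_mul] at hleib
  have hleft : ∀ p : ℕ × ℕ, (p.1 + 1) • (e (p.1 + 1) * gammaD K Δ ldiv D (e p.2)) =
      (e p.1 * a) * gammaD K Δ ldiv D (e p.2) := fun p => by rw [← smul_mul_assoc, hea]
  simp only [hleft, ← mul_smul_comm] at hleib
  rw [Finset.sum_sub_distrib, sub_add_eq_add_sub, eq_sub_iff_add_eq, add_comm, hleib]

theorem succ_nsmul_gammaD_succ (he : IsDividedPowerSeq Δ ε e) {a : F2 K}
    (hea : ∀ n, (n + 1) • e (n + 1) = e n * a)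
    (hldiv₂ : ∀ u v, TensorProduct.lift
        ((LinearMap.mul K (F2 K)).compl₂ (ldiv.flip v)) (Δ u) = ε u • v)
    {br : F2 K →ₗ[K] F2 K →ₗ[K] F2 K →ₗ[K] F2 K}
    (hbr : ∀ w a b, (w * a) * b - (w * b) * a =
      -(TensorProduct.lift
          ((LinearMap.mul K (F2 K)).compl₂ ((br.flip a).flip b)) (Δ w)))
    (hD : ∀ u v, D (u * v) = D u * v + u * D v) (n : ℕ) :
    (n + 1) • gammaD K Δ ldiv D (e (n + 1)) = (if n = 0 then D a else 0) +
      ∑ p ∈ antidiagonal n, br (e p.1) a (gammaD K Δ ldiv D (e p.2)) := by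
  set G := fun n => gammaD K Δ ldiv D (e n)
  refine congrFun (eq_of_forall_sum_antidiagonal_mul_eq (f := fun n => (n + 1) • G (n + 1))
    (g := fun n => (if n = 0 then D a else 0) + ∑ p ∈ antidiagonal n, br (e p.1) a (G p.2))
    he.zero fun m => ?_) n
  have hbracket : ∀ i j, (e i * G j) * a - (e i * a) * G j =
      ∑ q ∈ antidiagonal i, e q.1 * br (e q.2) a (G j) := fun i j => by
    rw [← neg_sub, he.mul_mul_sub_mul_mul hbr, neg_neg]
  have hunit : ∑ p ∈ antidiagonal m, e p.1 * (if p.2 = 0 then D a else 0) = e m * D a := by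
    simp only [mul_ite, mul_zero]
    rw [← Finset.Nat.sum_antidiagonal_swap]
    exact sum_antidiagonal_ite_fst_eq_zero (fun i => e i * D a) m
  calc ∑ p ∈ antidiagonal m, e p.1 * ((p.2 + 1) • G (p.2 + 1))
      = ∑ p ∈ antidiagonal m, ∑ q ∈ antidiagonal p.1, e q.1 * br (e q.2) a (G p.2) + e m * D a := by
        simp only [G, he.sum_mul_succ_nsmul_gammaD_succ hea hldiv₂ hD, hbracket]
    _ = ∑ p ∈ antidiagonal m, ∑ q ∈ antidiagonal p.2, e p.1 * br (e q.1) a (G q.2) + e m * D a := by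
        rw [sum_antidiagonal_sum_antidiagonal_assoc (fun i k l => e i * br (e k) a (G l))]
    _ = _ := by
        simp only [mul_add, Finset.sum_add_distrib, hunit, Finset.mul_sum]
        exact add_comm _ _

end IsDividedPowerSeq

section DividedLpow

variable {K : Type*} [Field K] [CharZero K] {Δ : F2 K →ₗ[K] F2 K ⊗[K] F2 K}
  {ε : F2 K →ₗ[K] K} {ldiv : F2 K →ₗ[K] F2 K →ₗ[K] F2 K} {D : F2 K →ₗ[K] F2 K} {a : F2 K}

theorem gammaD_dividedLpow_one (he : IsDividedPowerSeq Δ ε (dividedLpow a))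
    (hldiv₂ : ∀ u v, TensorProduct.lift
        ((LinearMap.mul K (F2 K)).compl₂ (ldiv.flip v)) (Δ u) = ε u • v)
    {br : F2 K →ₗ[K] F2 K →ₗ[K] F2 K →ₗ[K] F2 K}
    (hbr : ∀ w a b, (w * a) * b - (w * b) * a =
      -(TensorProduct.lift
          ((LinearMap.mul K (F2 K)).compl₂ ((br.flip a).flip b)) (Δ w)))
    (hD : ∀ u v, D (u * v) = D u * v + u * D v) :
    gammaD K Δ ldiv D (dividedLpow a 1) = D a := by
  simpa [he.gammaD_zero hD, -dividedLpow_zero] using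
    he.succ_nsmul_gammaD_succ (succ_nsmul_dividedLpow_succ a) hldiv₂ hbr hD 0

theorem gammaD_dividedLpow_succ (he : IsDividedPowerSeq Δ ε (dividedLpow a))
    (hldiv₂ : ∀ u v, TensorProduct.lift
        ((LinearMap.mul K (F2 K)).compl₂ (ldiv.flip v)) (Δ u) = ε u • v)
    {br : F2 K →ₗ[K] F2 K →ₗ[K] F2 K →ₗ[K] F2 K}
    (hbr : ∀ w a b, (w * a) * b - (w * b) * a =
      -(TensorProduct.lift
          ((LinearMap.mul K (F2 K)).compl₂ ((br.flip a).flip b)) (Δ w)))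
    (hD : ∀ u v, D (u * v) = D u * v + u * D v) {n : ℕ} (hn : n ≠ 0) :
    gammaD K Δ ldiv D (dividedLpow a (n + 1)) = ∑ i ∈ Finset.Icc 1 n,
      (((n : K) + 1)⁻¹ * ((n - i).factorial : K)⁻¹) •
        br (lpow K a (n - i)) a (gammaD K Δ ldiv D (dividedLpow a i)) := by
  rw [← inv_smul_smul₀ (Nat.cast_add_one_ne_zero (R := K) n) (gammaD K Δ ldiv D _),
    ← Nat.cast_succ, Nat.cast_smul_eq_nsmul,
    he.succ_nsmul_gammaD_succ (succ_nsmul_dividedLpow_succ a) hldiv₂ hbr hD, if_neg hn,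
    zero_add, sum_antidiagonal_eq_add_sum_Icc
      (fun l j => br (dividedLpow a l) a (gammaD K Δ ldiv D (dividedLpow a j))),
    he.gammaD_zero hD, map_zero, zero_add, Finset.smul_sum]
  refine Finset.sum_congr rfl fun i _ => ?_
  rw [dividedLpow, map_smul, LinearMap.smul_apply, LinearMap.smul_apply, smul_smul,
    Nat.cast_succ]

end DividedLpow

section

variable (K : Type*) [Field K] [CharZero K]

theorem tau_exp_l_recursion
    (Δ : F2 K →ₗ[K] F2 K ⊗[K] F2 K) (ε : F2 K →ₗ[K] K)
    (ldiv : F2 K →ₗ[K] F2 K →ₗ[K] F2 K)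
    (hΔmul : ∀ u v, Δ (u * v) = Δ u * Δ v)
    (hΔone : Δ 1 = 1 ⊗ₜ[K] 1)
    (hΔgen : ∀ i, Δ (gen2 K i) = gen2 K i ⊗ₜ[K] 1 + 1 ⊗ₜ[K] gen2 K i)
    (hεmul : ∀ u v, ε (u * v) = ε u * ε v)
    (hεone : ε 1 = 1)
    (hεgen : ∀ i, ε (gen2 K i) = 0)
    (hldiv₂ : ∀ u v, TensorProduct.lift
        ((LinearMap.mul K (F2 K)).compl₂ (ldiv.flip v)) (Δ u) = ε u • v)
    -- the Shestakov–Umirbaev bracket ⟨w; a, b⟩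
    (br : F2 K →ₗ[K] F2 K →ₗ[K] F2 K →ₗ[K] F2 K)
    (hbr : ∀ w a b, (w * a) * b - (w * b) * a =
      -(TensorProduct.lift
          ((LinearMap.mul K (F2 K)).compl₂ ((br.flip a).flip b)) (Δ w)))
    -- the derivation y∂_x
    (D : F2 K →ₗ[K] F2 K)
    (hD : ∀ u v, D (u * v) = D u * v + u * D v)
    (hDx : D (gen2 K 0) = gen2 K 1)
    -- τ_n, the degree-n component of τ^{exp_l(x)}(y) = γ_{y∂_x}(exp_l(x))
    (τ : ℕ → F2 K)
    (hτ0 : τ 0 = gen2 K 1)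
    (hτ : ∀ n, 1 ≤ n → τ n =
      ((n + 1).factorial : K)⁻¹ •
        gammaD K Δ ldiv D (lpow K (gen2 K 0) (n + 1))) :
    (∀ n, 1 ≤ n → τ n =
        ∑ i ∈ Finset.Icc 1 n,
          (((n : K) + 1)⁻¹ * (((n - i).factorial : K))⁻¹) •
            br (lpow K (gen2 K 0) (n - i)) (gen2 K 0) (τ (i - 1))) ∧
      τ 1 = (2 : K)⁻¹ • br 1 (gen2 K 0) (gen2 K 1) ∧
      τ 1 = -((2 : K)⁻¹) •
        (gen2 K 0 * gen2 K 1 - gen2 K 1 * gen2 K 0) := by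
  have he := isDividedPowerSeq_dividedLpow hΔmul hΔone hεmul hεone (hΔgen 0) (hεgen 0)
  have hτG : ∀ n, τ n = gammaD K Δ ldiv D (dividedLpow (gen2 K 0) (n + 1)) := by
    rintro (_ | n)
    · rw [hτ0, gammaD_dividedLpow_one he hldiv₂ hbr hD, hDx]
    · rw [hτ _ n.succ_pos, dividedLpow, map_smul]
  have hrecursion : ∀ n, 1 ≤ n → τ n = ∑ i ∈ Finset.Icc 1 n,
      (((n : K) + 1)⁻¹ * (((n - i).factorial : K))⁻¹) •
        br (lpow K (gen2 K 0) (n - i)) (gen2 K 0) (τ (i - 1)) := by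
    intro n hn
    rw [hτG, gammaD_dividedLpow_succ he hldiv₂ hbr hD (by omega)]
    refine Finset.sum_congr rfl fun i hi => ?_
    rw [hτG, Nat.sub_add_cancel (Finset.mem_Icc.1 hi).1]
  have hτ₁ : τ 1 = (2 : K)⁻¹ • br 1 (gen2 K 0) (gen2 K 1) := by
    simpa [lpow, hτ0, one_add_one_eq_two] using hrecursion 1 le_rfl
  have hbr₁ := hbr 1 (gen2 K 0) (gen2 K 1)
  rw [hΔone, TensorProduct.lift.tmul] at hbr₁
  simp only [LinearMap.compl₂_apply, LinearMap.flip_apply, LinearMap.mul_apply', one_mul] at hbr₁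
  exact ⟨hrecursion, hτ₁, by rw [hτ₁, hbr₁, neg_smul, smul_neg, neg_neg]⟩

end
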